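/- For every z > −1, 2 φ(z)/(z + √(z^2+4)) ≤ 1 − Φ(z) ≤ 4 φ(z)/(3z + √(z^2+8)), where Φ is the standard normal cdf and φ its density. -/

import Mathlib

/-!
If `r` satisfies the differential inequality `x r - r' ≤ 1` on `(a, ∞)` and has a limit at
`+∞`, then `(1 - Φ) - φ r` has derivative `φ (x r - r' - 1) ≤ 0` there and tends to `0`, so
it is nonnegative: `φ r` is a lower bound for the Gaussian tail. The reverse inequality gives
an upper bound. For `r = 2 / (x + s)`, `s = √(x² + 4)`, the inequality reduces to
`x s ≤ x² + 2`, which is AM-GM since `s² = x² + 4`. For `r = 4 / (3x + t)`, `t = √(x² + 8)`,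
it reduces to `x (x² + 6) ≤ (x² + 2) t`, whose two sides have squares differing by `32`; the
condition `x > -1` keeps `3x + t` positive.
-/

/-- The standard normal density φ(x) = exp(−x²/2)/√(2π). -/
noncomputable def stdNormalPDF (x : ℝ) : ℝ :=
  Real.exp (-x ^ 2 / 2) / Real.sqrt (2 * Real.pi)

/-- The standard normal distribution function Φ(z) = ∫_{−∞}^z φ(x) dx. -/
noncomputable def stdNormalCDF (z : ℝ) : ℝ :=
  ∫ x in Set.Iic z, stdNormalPDF x

open Real MeasureTheory ProbabilityTheory Filter Set Topology

lemma stdNormalPDF_eq_gaussianPDFReal : stdNormalPDF = gaussianPDFReal 0 1 := by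
  ext x
  simp [stdNormalPDF, gaussianPDFReal, div_eq_inv_mul]

lemma stdNormalPDF_pos (x : ℝ) : 0 < stdNormalPDF x :=
  stdNormalPDF_eq_gaussianPDFReal ▸ gaussianPDFReal_pos 0 1 x one_ne_zero

lemma continuous_stdNormalPDF : Continuous stdNormalPDF := by
  unfold stdNormalPDF
  fun_prop

lemma integrable_stdNormalPDF : Integrable stdNormalPDF :=
  stdNormalPDF_eq_gaussianPDFReal ▸ integrable_gaussianPDFReal 0 1

lemma hasDerivAt_stdNormalPDF (x : ℝ) : HasDerivAt stdNormalPDF (-x * stdNormalPDF x) x := by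
  have h : HasDerivAt (fun y : ℝ => -y ^ 2 / 2) (-x) x :=
    ((hasDerivAt_pow 2 x).neg.div_const 2).congr_deriv (by norm_num; ring)
  exact (h.exp.div_const (√(2 * π))).congr_deriv (by simp only [stdNormalPDF]; ring)

lemma tendsto_stdNormalPDF_atTop : Tendsto stdNormalPDF atTop (𝓝 0) := by
  have h : Tendsto (fun x : ℝ => -x ^ 2 / 2) atTop atBot :=
    (tendsto_neg_atBot_iff.2 (tendsto_pow_atTop two_ne_zero)).atBot_div_const two_pos
  have h' := (tendsto_exp_atBot.comp h).div_const (√(2 * π))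
  rwa [zero_div] at h'

lemma stdNormalCDF_eq_cdf_gaussianReal : stdNormalCDF = cdf (gaussianReal 0 1) := by
  ext z
  rw [cdf_eq_real, measureReal_def, gaussianReal_apply_eq_integral _ one_ne_zero,
    ENNReal.toReal_ofReal (setIntegral_nonneg measurableSet_Iic
      fun x _ => gaussianPDFReal_nonneg 0 1 x), stdNormalCDF, stdNormalPDF_eq_gaussianPDFReal]

lemma tendsto_stdNormalCDF_atTop : Tendsto stdNormalCDF atTop (𝓝 1) :=
  stdNormalCDF_eq_cdf_gaussianReal ▸ tendsto_cdf_atTop _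

lemma hasDerivAt_stdNormalCDF (z : ℝ) : HasDerivAt stdNormalCDF (stdNormalPDF z) z := by
  have h : stdNormalCDF = fun x => stdNormalCDF 0 + ∫ t in (0 : ℝ)..x, stdNormalPDF t := by
    ext x
    rw [← intervalIntegral.integral_Iic_sub_Iic integrable_stdNormalPDF.integrableOn
      integrable_stdNormalPDF.integrableOn, stdNormalCDF, stdNormalCDF, add_sub_cancel]
  rw [h]
  exact (intervalIntegral.integral_hasDerivAt_right
    (continuous_stdNormalPDF.intervalIntegrable _ _)
    continuous_stdNormalPDF.stronglyMeasurable.stronglyMeasurableAtFilter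
    continuous_stdNormalPDF.continuousAt).const_add _

section MillsRatio

variable {r r' : ℝ → ℝ} {a c : ℝ}

lemma hasDerivAt_tail_sub_stdNormalPDF_mul {x : ℝ} (hr : HasDerivAt r (r' x) x) :
    HasDerivAt (fun y => 1 - stdNormalCDF y - stdNormalPDF y * r y)
      (stdNormalPDF x * (x * r x - r' x - 1)) x :=
  (((hasDerivAt_stdNormalCDF x).const_sub 1).sub
    ((hasDerivAt_stdNormalPDF x).mul hr)).congr_deriv (by ring)

lemma tendsto_tail_sub_stdNormalPDF_mul (hr : Tendsto r atTop (𝓝 c)) :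
    Tendsto (fun y => 1 - stdNormalCDF y - stdNormalPDF y * r y) atTop (𝓝 0) := by
  simpa using (tendsto_stdNormalCDF_atTop.const_sub 1).sub (tendsto_stdNormalPDF_atTop.mul hr)

lemma stdNormalPDF_mul_le_tail (hr : ∀ x ∈ Ioi a, HasDerivAt r (r' x) x)
    (hlim : Tendsto r atTop (𝓝 c)) (hineq : ∀ x ∈ Ioi a, x * r x - r' x ≤ 1)
    {z : ℝ} (hz : a < z) : stdNormalPDF z * r z ≤ 1 - stdNormalCDF z := by
  have hanti : AntitoneOn (fun y => 1 - stdNormalCDF y - stdNormalPDF y * r y) (Ioi a) := by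
    refine antitoneOn_of_hasDerivWithinAt_nonpos (convex_Ioi a)
      (f' := fun x => stdNormalPDF x * (x * r x - r' x - 1)) (fun x hx =>
      (hasDerivAt_tail_sub_stdNormalPDF_mul (hr x hx)).continuousAt.continuousWithinAt) ?_ ?_
      <;> rw [interior_Ioi]
    · exact fun x hx => (hasDerivAt_tail_sub_stdNormalPDF_mul (hr x hx)).hasDerivWithinAt
    · exact fun x hx => mul_nonpos_of_nonneg_of_nonpos (stdNormalPDF_pos x).le
        (by linarith [hineq x hx])
  have := le_of_tendsto (tendsto_tail_sub_stdNormalPDF_mul hlim)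
    ((eventually_ge_atTop z).mono fun y hy => hanti hz (hz.trans_le hy) hy)
  linarith

lemma tail_le_stdNormalPDF_mul (hr : ∀ x ∈ Ioi a, HasDerivAt r (r' x) x)
    (hlim : Tendsto r atTop (𝓝 c)) (hineq : ∀ x ∈ Ioi a, 1 ≤ x * r x - r' x)
    {z : ℝ} (hz : a < z) : 1 - stdNormalCDF z ≤ stdNormalPDF z * r z := by
  have hmono : MonotoneOn (fun y => 1 - stdNormalCDF y - stdNormalPDF y * r y) (Ioi a) := by
    refine monotoneOn_of_hasDerivWithinAt_nonneg (convex_Ioi a)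
      (f' := fun x => stdNormalPDF x * (x * r x - r' x - 1)) (fun x hx =>
      (hasDerivAt_tail_sub_stdNormalPDF_mul (hr x hx)).continuousAt.continuousWithinAt) ?_ ?_
      <;> rw [interior_Ioi]
    · exact fun x hx => (hasDerivAt_tail_sub_stdNormalPDF_mul (hr x hx)).hasDerivWithinAt
    · exact fun x hx => mul_nonneg (stdNormalPDF_pos x).le (by linarith [hineq x hx])
  have := ge_of_tendsto (tendsto_tail_sub_stdNormalPDF_mul hlim)
    ((eventually_ge_atTop z).mono fun y hy => hmono hz (hz.trans_le hy) hy)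
  linarith

end MillsRatio

lemma hasDerivAt_sqrt_sq_add {c : ℝ} (hc : 0 < c) (x : ℝ) :
    HasDerivAt (fun y => √(y ^ 2 + c)) (x / √(x ^ 2 + c)) x := by
  have h := ((hasDerivAt_pow 2 x).add_const c).sqrt (by positivity)
  exact h.congr_deriv (by field_simp; norm_num)

lemma add_sqrt_sq_add_four_pos (x : ℝ) : 0 < x + √(x ^ 2 + 4) := by
  linarith [neg_sqrt_lt_of_sq_lt (show x ^ 2 < x ^ 2 + 4 by linarith)]

lemma three_mul_add_sqrt_sq_add_eight_pos {x : ℝ} (hx : -1 < x) : 0 < 3 * x + √(x ^ 2 + 8) := by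
  rcases le_or_gt 0 x with hx0 | hx0
  · positivity
  · linarith [neg_sqrt_lt_of_sq_lt (show (3 * x) ^ 2 < x ^ 2 + 8 by nlinarith)]

lemma hasDerivAt_div_mul_add_sqrt (k : ℝ) {m c x : ℝ} (hc : 0 < c)
    (hx : m * x + √(x ^ 2 + c) ≠ 0) :
    HasDerivAt (fun y => k / (m * y + √(y ^ 2 + c)))
      (-(k * (m + x / √(x ^ 2 + c))) / (m * x + √(x ^ 2 + c)) ^ 2) x := by
  have h := ((hasDerivAt_id x).const_mul m).add (hasDerivAt_sqrt_sq_add hc x)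
  exact ((hasDerivAt_const x k).div h hx).congr_deriv (by simp)

lemma tendsto_div_mul_add_sqrt_atTop (k : ℝ) {m c : ℝ} (hm : 0 ≤ m) (hc : 0 ≤ c) :
    Tendsto (fun y => k / (m * y + √(y ^ 2 + c))) atTop (𝓝 0) := by
  refine tendsto_const_nhds.div_atTop (tendsto_atTop_mono' _ ?_ tendsto_id)
  filter_upwards [eventually_ge_atTop 0] with y hy
  have : y ≤ √(y ^ 2 + c) := (Real.le_sqrt hy (by positivity)).2 (by linarith)
  have : 0 ≤ m * y := mul_nonneg hm hy
  simp only [id]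
  linarith

lemma komatsu_ineq (x : ℝ) :
    x * (2 / (x + √(x ^ 2 + 4))) + 2 * (1 + x / √(x ^ 2 + 4)) / (x + √(x ^ 2 + 4)) ^ 2
      ≤ 1 := by
  set s := √(x ^ 2 + 4)
  have hs : 0 < s := by positivity
  have hs2 : s ^ 2 = x ^ 2 + 4 := Real.sq_sqrt (by positivity)
  have hxs : 0 < x + s := add_sqrt_sq_add_four_pos x
  have hE : x * (2 / (x + s)) + 2 * (1 + x / s) / (x + s) ^ 2 =
      2 * (x * s + 1) / (s * (x + s)) := by
    field_simp
    ring
  rw [hE, div_le_one (by positivity)]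
  nlinarith [sq_nonneg (s - x)]

lemma szarekWerner_ineq {x : ℝ} (hx : -1 < x) :
    1 ≤ x * (4 / (3 * x + √(x ^ 2 + 8))) +
      4 * (3 + x / √(x ^ 2 + 8)) / (3 * x + √(x ^ 2 + 8)) ^ 2 := by
  set t := √(x ^ 2 + 8)
  have ht : 0 < t := by positivity
  have ht2 : t ^ 2 = x ^ 2 + 8 := Real.sq_sqrt (by positivity)
  have hxt : 0 < 3 * x + t := three_mul_add_sqrt_sq_add_eight_pos hx
  have hxt' : x * 3 + t ≠ 0 := by linarith
  have hE : x * (4 / (3 * x + t)) + 4 * (3 + x / t) / (3 * x + t) ^ 2 - 1 =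
      2 * ((x ^ 2 + 2) * t - x * (x ^ 2 + 6)) / (t * (3 * x + t) ^ 2) := by
    field_simp
    linear_combination (-(t + 2 * x)) * ht2
  have hsq : ((x ^ 2 + 2) * t) ^ 2 = (x * (x ^ 2 + 6)) ^ 2 + 32 := by
    rw [mul_pow, ht2]
    ring
  have hAB : x * (x ^ 2 + 6) ≤ (x ^ 2 + 2) * t := by
    nlinarith [show 0 < (x ^ 2 + 2) * t by positivity]
  have := div_nonneg (by linarith : 0 ≤ 2 * ((x ^ 2 + 2) * t - x * (x ^ 2 + 6)))
    (by positivity : 0 ≤ t * (3 * x + t) ^ 2)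
  linarith

theorem komatsu_lower_bound (z : ℝ) :
    2 * stdNormalPDF z / (z + √(z ^ 2 + 4)) ≤ 1 - stdNormalCDF z := by
  have h := stdNormalPDF_mul_le_tail (a := z - 1)
    (fun x _ => hasDerivAt_div_mul_add_sqrt 2 four_pos
      (by simpa using (add_sqrt_sq_add_four_pos x).ne'))
    (tendsto_div_mul_add_sqrt_atTop 2 zero_le_one (by norm_num))
    (fun x _ => by simpa [neg_div] using komatsu_ineq x) (sub_one_lt z)
  rw [mul_div_assoc, mul_div_left_comm]
  simpa only [one_mul] using h

theorem szarekWerner_upper_bound {z : ℝ} (hz : -1 < z) :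
    1 - stdNormalCDF z ≤ 4 * stdNormalPDF z / (3 * z + √(z ^ 2 + 8)) := by
  have h := tail_le_stdNormalPDF_mul (a := -1)
    (fun x hx => hasDerivAt_div_mul_add_sqrt 4 (by norm_num)
      (three_mul_add_sqrt_sq_add_eight_pos hx).ne')
    (tendsto_div_mul_add_sqrt_atTop 4 (by norm_num) (by norm_num))
    (fun x hx => by simpa [neg_div] using szarekWerner_ineq hx) hz
  rwa [mul_div_assoc, mul_div_left_comm]

/-- Komatsu's lower bound and the Szarek–Werner upper bound: for z > −1,
2φ(z)/(z + √(z²+4)) ≤ 1 − Φ(z) ≤ 4φ(z)/(3z + √(z²+8)). -/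
theorem stmt16 (z : ℝ) (hz : -1 < z) :
    2 * stdNormalPDF z / (z + Real.sqrt (z ^ 2 + 4)) ≤ 1 - stdNormalCDF z ∧
      1 - stdNormalCDF z ≤ 4 * stdNormalPDF z / (3 * z + Real.sqrt (z ^ 2 + 8)) :=
  ⟨komatsu_lower_bound z, szarekWerner_upper_bound hz⟩
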